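/- For every ε ∈ {1,−1} and every ν ∈ ℂ, the operators H, E, F of the deformed module Π(ε,ν) satisfy the sl₂ commutation relations H∘E − E∘H = 2E, H∘F − F∘H = −2F, E∘F − F∘E = H, and the Casimir operator Ω = H∘H − 2H + 4(E∘F) acts on V_ε as the scalar ν² − 1. -/

import Mathlib

namespace SL2Deform

/-- The index set `ℤ_ε = {j : ℤ | (-1)^j = ε}`, for a sign `ε ∈ {1, -1}`
(i.e. a unit of `ℤ`). -/
abbrev idx (ε : ℤˣ) : Type := {j : ℤ // (-1 : ℤˣ) ^ j = ε}

/-- `V ε`: the complex vector space of finitely supported functions on `ℤ_ε`,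
with standard basis `{v_j}`. -/
abbrev V (ε : ℤˣ) : Type := idx ε →₀ ℂ

/-- The standard basis vector `v_j` of `V ε`, for `j ∈ ℤ_ε`. -/
noncomputable def bv (ε : ℤˣ) (j : ℤ) (h : (-1 : ℤˣ) ^ j = ε) : V ε :=
  Finsupp.single ⟨j, h⟩ 1

lemma parity_two : (-1 : ℤˣ) ^ (2 : ℤ) = 1 := by decide
lemma parity_neg_two : (-1 : ℤˣ) ^ (-2 : ℤ) = 1 := by decide
lemma parity_zero : (-1 : ℤˣ) ^ (0 : ℤ) = 1 := by decide

lemma parity_shift {ε : ℤˣ} {j : ℤ} (h : (-1 : ℤˣ) ^ j = ε) {s : ℤ}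
    (hs : (-1 : ℤˣ) ^ s = 1) : (-1 : ℤˣ) ^ (j + s) = ε := by
  rw [zpow_add, h, hs, mul_one]

/-- If `m ∈ ℤ_{-ε}` then `m + 1 ∈ ℤ_ε`. -/
lemma parity_succ {ε : ℤˣ} {m : ℤ} (h : (-1 : ℤˣ) ^ m = -ε) :
    (-1 : ℤˣ) ^ (m + 1) = ε := by
  rw [zpow_add, h, zpow_one]
  simp

/-- If `m ∈ ℤ_{-ε}` then `m - 1 ∈ ℤ_ε`. -/
lemma parity_pred {ε : ℤˣ} {m : ℤ} (h : (-1 : ℤˣ) ^ m = -ε) :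
    (-1 : ℤˣ) ^ (m - 1) = ε := by
  rw [sub_eq_add_neg, zpow_add, h, zpow_neg, zpow_one]
  simp

/-- The linear operator on `V ε` sending `v_j` to `c j • v_{j+s}`,
for an even shift `s`. -/
noncomputable def shiftOp (ε : ℤˣ) (s : ℤ) (hs : (-1 : ℤˣ) ^ s = 1) (c : ℤ → ℂ) :
    V ε →ₗ[ℂ] V ε :=
  Finsupp.lsum ℂ fun j =>
    LinearMap.toSpanSingleton ℂ (V ε)
      (Finsupp.single ⟨j.1 + s, parity_shift j.2 hs⟩ (c j.1))

/-- `H v_j = j • v_j`. -/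
noncomputable def Hop (ε : ℤˣ) : V ε →ₗ[ℂ] V ε :=
  shiftOp ε 0 parity_zero fun j => (j : ℂ)

/-- Principal series: `E v_j = ½(ν + j + 1) • v_{j+2}`. -/
noncomputable def Eop (ε : ℤˣ) (ν : ℂ) : V ε →ₗ[ℂ] V ε :=
  shiftOp ε 2 parity_two fun j => (1 / 2 : ℂ) * (ν + j + 1)

/-- Principal series: `F v_j = ½(ν - j + 1) • v_{j-2}`. -/
noncomputable def Fop (ε : ℤˣ) (ν : ℂ) : V ε →ₗ[ℂ] V ε :=
  shiftOp ε (-2) parity_neg_two fun j => (1 / 2 : ℂ) * (ν - j + 1)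

/-- `f_m(ν) = ½ |ν²-m²|^{1/2} (ν+m)/|ν+m|` for `ν ≠ -m`, and `f_m(-m) = 0`. -/
noncomputable def fm (m : ℤ) (ν : ℂ) : ℂ :=
  if ν = -(m : ℂ) then 0
  else (1 / 2 : ℂ) * (Real.sqrt (‖ν ^ 2 - (m : ℂ) ^ 2‖) : ℝ) * (ν + m) /
    (‖ν + (m : ℂ)‖ : ℝ)

/-- Deformed module: `E v_{m-1} = f_m(ν) • v_{m+1}`, i.e. `E v_j = f_{j+1}(ν) • v_{j+2}`. -/
noncomputable def PEop (ε : ℤˣ) (ν : ℂ) : V ε →ₗ[ℂ] V ε :=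
  shiftOp ε 2 parity_two fun j => fm (j + 1) ν

/-- Deformed module: `F v_{m+1} = f_{-m}(ν) • v_{m-1}`, i.e. `F v_j = f_{-(j-1)}(ν) • v_{j-2}`. -/
noncomputable def PFop (ε : ℤˣ) (ν : ℂ) : V ε →ₗ[ℂ] V ε :=
  shiftOp ε (-2) parity_neg_two fun j => fm (1 - j) ν

/-- The module `π'(ε,ν)`: `E v_{m-1} = ½(ν - |m|) • v_{m+1}`,
i.e. `E v_j = ½(ν - |j+1|) • v_{j+2}`. -/
noncomputable def E'op (ε : ℤˣ) (ν : ℂ) : V ε →ₗ[ℂ] V ε :=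
  shiftOp ε 2 parity_two fun j => (1 / 2 : ℂ) * (ν - ((|j + 1| : ℤ) : ℂ))

/-- The module `π'(ε,ν)`: `F v_{m+1} = ½(ν + |m|) • v_{m-1}`,
i.e. `F v_j = ½(ν + |j-1|) • v_{j-2}`. -/
noncomputable def F'op (ε : ℤˣ) (ν : ℂ) : V ε →ₗ[ℂ] V ε :=
  shiftOp ε (-2) parity_neg_two fun j => (1 / 2 : ℂ) * (ν + ((|j - 1| : ℤ) : ℂ))

/-- `ν ∈ ℤ_{-ε}`: `ν` is an integer with `(-1)^ν = -ε`. -/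
def inZminus (ε : ℤˣ) (ν : ℂ) : Prop :=
  ∃ n : ℤ, ν = (n : ℂ) ∧ (-1 : ℤˣ) ^ n = -ε

section ModuleNotions

variable {M : Type*} [AddCommGroup M] [Module ℂ M]
variable {N : Type*} [AddCommGroup N] [Module ℂ N]

/-- `W` is a submodule for the module with operators `A, B, C`: it is invariant
under all three operators. -/
def Invariant (A B C : M →ₗ[ℂ] M) (W : Submodule ℂ M) : Prop :=
  (∀ x ∈ W, A x ∈ W) ∧ (∀ x ∈ W, B x ∈ W) ∧ (∀ x ∈ W, C x ∈ W)

/-- The module with operators `A, B, C` is irreducible: its only submodules are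
`0` and the whole space. -/
def IsIrreducibleRep (A B C : M →ₗ[ℂ] M) : Prop :=
  ∀ W : Submodule ℂ M, Invariant A B C W → W = ⊥ ∨ W = ⊤

/-- `W` is an irreducible submodule: invariant, nonzero, and with no nonzero
proper invariant subspace. -/
def IsIrreducibleSubmodule (A B C : M →ₗ[ℂ] M) (W : Submodule ℂ M) : Prop :=
  Invariant A B C W ∧ W ≠ ⊥ ∧
    ∀ U : Submodule ℂ M, Invariant A B C U → U ≤ W → U = ⊥ ∨ U = W

/-- The module with operators `A, B, C` is completely reducible: every invariant
subspace has an invariant complement. -/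
def CompletelyReducible (A B C : M →ₗ[ℂ] M) : Prop :=
  ∀ W : Submodule ℂ M, Invariant A B C W →
    ∃ U : Submodule ℂ M, Invariant A B C U ∧ IsCompl W U

/-- The two modules (given by operator triples) are isomorphic. -/
def Intertwined (A B C : M →ₗ[ℂ] M) (A' B' C' : N →ₗ[ℂ] N) : Prop :=
  ∃ e : M ≃ₗ[ℂ] N, (∀ x, e (A x) = A' (e x)) ∧ (∀ x, e (B x) = B' (e x)) ∧
    (∀ x, e (C x) = C' (e x))

/-- An invariant Hermitian form for the module with operators `A, B, C`
(`A` playing the role of `H`, `B` of `E`, `C` of `F`): a sesquilinear form,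
conjugate-symmetric, with `⟨Hv,w⟩ = ⟨v,Hw⟩`, `⟨Ev,w⟩ + ⟨v,Fw⟩ = 0`,
`⟨Fv,w⟩ + ⟨v,Ew⟩ = 0`. -/
structure IsInvHermForm (A B C : M →ₗ[ℂ] M) (Φ : M → M → ℂ) : Prop where
  add_left : ∀ u v w, Φ (u + v) w = Φ u w + Φ v w
  smul_left : ∀ (a : ℂ) (v w : M), Φ (a • v) w = a * Φ v w
  conj_symm : ∀ v w, Φ w v = (starRingEnd ℂ) (Φ v w)
  inv_A : ∀ v w, Φ (A v) w = Φ v (A w)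
  inv_BC : ∀ v w, Φ (B v) w + Φ v (C w) = 0
  inv_CB : ∀ v w, Φ (C v) w + Φ v (B w) = 0

end ModuleNotions

/-- `span{v_j : j ≥ n}`. -/
noncomputable def spanGE (ε : ℤˣ) (n : ℤ) : Submodule ℂ (V ε) :=
  Submodule.span ℂ {x : V ε | ∃ j : idx ε, n ≤ j.1 ∧ x = Finsupp.single j 1}

/-- `span{v_j : j ≤ n}`. -/
noncomputable def spanLE (ε : ℤˣ) (n : ℤ) : Submodule ℂ (V ε) :=
  Submodule.span ℂ {x : V ε | ∃ j : idx ε, j.1 ≤ n ∧ x = Finsupp.single j 1}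

/-- `span{v_j : |j| ≤ n}`. -/
noncomputable def spanAbsLE (ε : ℤˣ) (n : ℤ) : Submodule ℂ (V ε) :=
  Submodule.span ℂ {x : V ε | ∃ j : idx ε, |j.1| ≤ n ∧ x = Finsupp.single j 1}

/-- The diagonal operator `S v_j = c j • v_j`. -/
noncomputable def diagMap (ε : ℤˣ) (c : idx ε → ℂ) : V ε →ₗ[ℂ] V ε :=
  Finsupp.lsum ℂ fun j => LinearMap.toSpanSingleton ℂ (V ε) (Finsupp.single j (c j))

/-! `H`, `E` and `F` are weighted shifts `v_j ↦ c(j) v_{j+s}`, which compose by shifting and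
multiplying their weights, so every relation reduces to an identity between weights. `H` has
weight `j`, which makes `[H, X] = s X` for any shift `X` by `s`; the remaining relations come
down to `f_m(ν) f_{-m}(ν) = (ν² - m²) / 4`, where the phases `(ν ± m)/|ν ± m|` of the two
factors combine with `|ν² - m²|` into `ν² - m²`. -/

section ShiftOp

variable {ε : ℤˣ}

lemma shiftOp_single {s : ℤ} (hs : (-1 : ℤˣ) ^ s = 1) (c : ℤ → ℂ) (j : idx ε) (b : ℂ) :
    shiftOp ε s hs c (Finsupp.single j b)
      = Finsupp.single ⟨j.1 + s, parity_shift j.2 hs⟩ (c j.1 * b) := by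
  simp [shiftOp, Finsupp.smul_single, mul_comm]

lemma shiftOp_congr {s t : ℤ} (hs : (-1 : ℤˣ) ^ s = 1) (ht : (-1 : ℤˣ) ^ t = 1)
    (hst : s = t) {c d : ℤ → ℂ} (hcd : ∀ j, c j = d j) :
    shiftOp ε s hs c = shiftOp ε t ht d := by
  subst hst
  rw [funext hcd]

lemma shiftOp_comp {s t u : ℤ} (hs : (-1 : ℤˣ) ^ s = 1) (ht : (-1 : ℤˣ) ^ t = 1)
    (hu : (-1 : ℤˣ) ^ u = 1) (hstu : t + s = u) (c d : ℤ → ℂ) :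
    shiftOp ε s hs c ∘ₗ shiftOp ε t ht d = shiftOp ε u hu fun j => c (j + t) * d j := by
  subst hstu
  refine Finsupp.lhom_ext fun j b => ?_
  simp only [LinearMap.comp_apply, shiftOp_single, add_assoc, mul_assoc]

lemma shiftOp_add {s : ℤ} (hs : (-1 : ℤˣ) ^ s = 1) (c d : ℤ → ℂ) :
    shiftOp ε s hs c + shiftOp ε s hs d = shiftOp ε s hs (c + d) :=
  Finsupp.lhom_ext fun j b => by
    simp only [LinearMap.add_apply, shiftOp_single, Pi.add_apply, add_mul, Finsupp.single_add]

lemma shiftOp_sub {s : ℤ} (hs : (-1 : ℤˣ) ^ s = 1) (c d : ℤ → ℂ) :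
    shiftOp ε s hs c - shiftOp ε s hs d = shiftOp ε s hs (c - d) :=
  Finsupp.lhom_ext fun j b => by
    simp only [LinearMap.sub_apply, shiftOp_single, Pi.sub_apply, sub_mul, Finsupp.single_sub]

lemma smul_shiftOp {s : ℤ} (hs : (-1 : ℤˣ) ^ s = 1) (a : ℂ) (c : ℤ → ℂ) :
    a • shiftOp ε s hs c = shiftOp ε s hs (a • c) :=
  Finsupp.lhom_ext fun j b => by
    simp only [LinearMap.smul_apply, shiftOp_single, Finsupp.smul_single, Pi.smul_apply,
      smul_eq_mul, mul_assoc]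

lemma shiftOp_zero_const (hs : (-1 : ℤˣ) ^ (0 : ℤ) = 1) (a : ℂ) :
    shiftOp ε 0 hs (fun _ => a) = a • LinearMap.id :=
  Finsupp.lhom_ext fun j b => by simp [shiftOp_single, Finsupp.smul_single]

lemma Hop_comp_sub_comp_Hop {s : ℤ} (hs : (-1 : ℤˣ) ^ s = 1) (c : ℤ → ℂ) :
    Hop ε ∘ₗ shiftOp ε s hs c - shiftOp ε s hs c ∘ₗ Hop ε = (s : ℂ) • shiftOp ε s hs c := by
  rw [Hop, shiftOp_comp _ _ hs (zero_add s), shiftOp_comp _ _ hs (add_zero s),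
    shiftOp_sub, smul_shiftOp]
  refine shiftOp_congr _ _ rfl fun j => ?_
  simp only [Pi.sub_apply, Pi.smul_apply, smul_eq_mul, add_zero]
  push_cast
  ring

lemma Hop_comp_Hop : Hop ε ∘ₗ Hop ε = shiftOp ε 0 parity_zero fun j => (j : ℂ) ^ 2 := by
  rw [Hop, shiftOp_comp _ _ parity_zero (add_zero 0)]
  exact shiftOp_congr _ _ rfl fun j => by rw [add_zero, sq]

end ShiftOp

lemma fm_mul_fm_neg (m : ℤ) (ν : ℂ) : fm m ν * fm (-m) ν = (ν ^ 2 - (m : ℂ) ^ 2) / 4 := by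
  unfold fm
  simp only [Int.cast_neg, neg_neg]
  by_cases hp : ν = -(m : ℂ)
  · rw [if_pos hp, zero_mul, hp]; ring
  by_cases hq : ν = (m : ℂ)
  · rw [if_neg hp, if_pos hq, mul_zero, hq]; ring
  rw [if_neg hp, if_neg hq, ← sub_eq_add_neg, neg_sq]
  have hp' : ((‖ν + (m : ℂ)‖ : ℝ) : ℂ) ≠ 0 := by
    simpa [add_eq_zero_iff_eq_neg] using hp
  have hq' : ((‖ν - (m : ℂ)‖ : ℝ) : ℂ) ≠ 0 := by
    simpa [sub_eq_zero] using hq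
  have hsqrt : ((Real.sqrt ‖ν ^ 2 - (m : ℂ) ^ 2‖ : ℝ) : ℂ) ^ 2
      = ((‖ν + (m : ℂ)‖ : ℝ) : ℂ) * ((‖ν - (m : ℂ)‖ : ℝ) : ℂ) := by
    rw [← Complex.ofReal_pow, Real.sq_sqrt (norm_nonneg _), ← Complex.ofReal_mul, ← norm_mul]
    congr 3
    ring
  rw [div_mul_div_comm, div_eq_iff (mul_ne_zero hp' hq')]
  linear_combination ((ν + m) * (ν - m) / 4) * hsqrt

lemma PEop_comp_PFop (ε : ℤˣ) (ν : ℂ) :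
    PEop ε ν ∘ₗ PFop ε ν = shiftOp ε 0 parity_zero fun j => (ν ^ 2 - ((j : ℂ) - 1) ^ 2) / 4 := by
  rw [PEop, PFop, shiftOp_comp _ _ parity_zero (by norm_num)]
  refine shiftOp_congr _ _ rfl fun j => ?_
  rw [show j + -2 + 1 = j - 1 by ring, show 1 - j = -(j - 1) by ring, fm_mul_fm_neg]
  push_cast
  ring

lemma PFop_comp_PEop (ε : ℤˣ) (ν : ℂ) :
    PFop ε ν ∘ₗ PEop ε ν = shiftOp ε 0 parity_zero fun j => (ν ^ 2 - ((j : ℂ) + 1) ^ 2) / 4 := by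
  rw [PEop, PFop, shiftOp_comp _ _ parity_zero (by norm_num)]
  refine shiftOp_congr _ _ rfl fun j => ?_
  rw [show 1 - (j + 2) = -(j + 1) by ring, mul_comm, fm_mul_fm_neg]
  push_cast
  ring

/-- For every `ε ∈ {1,-1}` and `ν ∈ ℂ`, the operators `H, E, F` of the
deformed module `Π(ε,ν)` satisfy the `sl₂` commutation relations, and the Casimir
`Ω = H∘H - 2H + 4(E∘F)` acts on `V ε` as the scalar `ν² - 1`. -/
theorem deformed_sl2_relations_and_casimir (ε : ℤˣ) (ν : ℂ) :
    Hop ε ∘ₗ PEop ε ν - PEop ε ν ∘ₗ Hop ε = (2 : ℂ) • PEop ε ν ∧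
    Hop ε ∘ₗ PFop ε ν - PFop ε ν ∘ₗ Hop ε = -((2 : ℂ) • PFop ε ν) ∧
    PEop ε ν ∘ₗ PFop ε ν - PFop ε ν ∘ₗ PEop ε ν = Hop ε ∧
    ∀ v : V ε,
      (Hop ε ∘ₗ Hop ε - (2 : ℂ) • Hop ε + (4 : ℂ) • (PEop ε ν ∘ₗ PFop ε ν)) v
        = (ν ^ 2 - 1) • v := by
  refine ⟨?_, ?_, ?_, fun v => ?_⟩
  · rw [PEop, Hop_comp_sub_comp_Hop, Int.cast_ofNat]
  · rw [PFop, Hop_comp_sub_comp_Hop, Int.cast_neg, Int.cast_ofNat]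
    exact neg_smul (2 : ℂ) (PFop ε ν)
  · rw [PEop_comp_PFop, PFop_comp_PEop, shiftOp_sub, Hop]
    exact shiftOp_congr _ _ rfl fun j => by simp only [Pi.sub_apply]; ring
  · have casimir : Hop ε ∘ₗ Hop ε - (2 : ℂ) • Hop ε + (4 : ℂ) • (PEop ε ν ∘ₗ PFop ε ν)
        = (ν ^ 2 - 1) • LinearMap.id := by
      rw [Hop_comp_Hop, PEop_comp_PFop, Hop, smul_shiftOp, smul_shiftOp, shiftOp_sub,
        shiftOp_add, ← shiftOp_zero_const parity_zero]
      exact shiftOp_congr _ _ rfl fun j => by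
        simp only [Pi.add_apply, Pi.sub_apply, Pi.smul_apply, smul_eq_mul]; ring
    rw [casimir, LinearMap.smul_apply, LinearMap.id_apply]

end SL2Deform
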